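/- arXiv:2212.07014 — 5 statements merged into one kernel-verified Lean document; each statement's English description precedes it below -/
import Mathlib

section
/- Under Assumption 2(ii)–(iii), the augmented pseudogradient is θ-Lipschitz continuous: for all stacked estimate vectors 𝐱 = (x¹,…,x^N) and 𝐲 = (y¹,…,y^N) in (ℝ^N)^N one has ‖𝐅(𝐱) − 𝐅(𝐲)‖ ≤ θ‖𝐱 − 𝐲‖, where θ = max_{i∈{1,…,N}} √(θ_i² + θ_{-i}²) and all norms are Euclidean. -/
/-!
Moving from `y^i` to `x^i` in two legs — first the own coordinate, then the others — bounds
`|G_i(x^i) - G_i(y^i)|` by `θ_i |x^i_i - y^i_i| + θ_{-i} ‖x^i_{-i} - y^i_{-i}‖`, which by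
Cauchy–Schwarz in `ℝ²` is at most `√(θ_i² + θ_{-i}²) ‖x^i - y^i‖ ≤ θ ‖x^i - y^i‖`.
Squaring and summing over `i` gives the bound for the stacked vectors.
-/

open Finset Function

lemma mul_add_mul_le_sqrt_mul_sqrt (a b c d : ℝ) :
    a * c + b * d ≤ √(a ^ 2 + b ^ 2) * √(c ^ 2 + d ^ 2) := by
  rw [← Real.sqrt_mul (by positivity)]
  exact (le_abs_self _).trans (Real.abs_le_sqrt (by nlinarith [sq_nonneg (a * d - b * c)]))

lemma PiLp.norm_le_mul_norm_of_forall_norm_apply_le {ι : Type*} [Fintype ι]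
    {β γ : ι → Type*} [∀ i, SeminormedAddCommGroup (β i)] [∀ i, SeminormedAddCommGroup (γ i)]
    {f : PiLp 2 γ} {x : PiLp 2 β} {L : ℝ} (hL : 0 ≤ L) (h : ∀ i, ‖f i‖ ≤ L * ‖x i‖) :
    ‖f‖ ≤ L * ‖x‖ := by
  rw [← pow_le_pow_iff_left₀ (norm_nonneg _) (by positivity) two_ne_zero, mul_pow,
    norm_sq_eq_of_L2, norm_sq_eq_of_L2, mul_sum]
  refine sum_le_sum fun i _ => ?_
  rw [← mul_pow]
  exact pow_le_pow_left₀ (norm_nonneg _) (h i) 2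

namespace EuclideanSpace

variable {ι : Type*} [Fintype ι] [DecidableEq ι]

lemma norm_sub_sq_eq_sq_add_sum_erase (u v : EuclideanSpace ℝ ι) (i : ι) :
    ‖u - v‖ ^ 2 = (u i - v i) ^ 2 + ∑ j ∈ univ.erase i, (u j - v j) ^ 2 := by
  simp only [real_norm_sq_eq, PiLp.sub_apply]
  exact (add_sum_erase _ _ (mem_univ i)).symm

lemma abs_sub_le_of_lipschitz_own_and_others {g : EuclideanSpace ℝ ι → ℝ} {i : ι} {a b : ℝ}
    (hown : ∀ (x : EuclideanSpace ℝ ι) (s s' : ℝ),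
      |g (WithLp.toLp 2 (update x i s)) - g (WithLp.toLp 2 (update x i s'))| ≤ a * |s - s'|)
    (hothers : ∀ x y : EuclideanSpace ℝ ι, x i = y i →
      |g x - g y| ≤ b * √(∑ j ∈ univ.erase i, (x j - y j) ^ 2))
    (u v : EuclideanSpace ℝ ι) :
    |g u - g v| ≤ √(a ^ 2 + b ^ 2) * ‖u - v‖ := by
  set w : EuclideanSpace ℝ ι := WithLp.toLp 2 (update u i (v i))
  have hown' : |g u - g w| ≤ a * |u i - v i| := by
    simpa only [update_eq_self] using hown u (u i) (v i)
  have hothers' : |g w - g v| ≤ b * √(∑ j ∈ univ.erase i, (u j - v j) ^ 2) := by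
    have hw_others : ∀ j ∈ univ.erase i, (w j - v j) ^ 2 = (u j - v j) ^ 2 := fun j hj => by
      rw [show w j = u j from update_of_ne (ne_of_mem_erase hj) _ _]
    rw [← sum_congr rfl hw_others]
    exact hothers w v (update_self _ _ _)
  calc |g u - g v| ≤ |g u - g w| + |g w - g v| := abs_sub_le _ _ _
    _ ≤ a * |u i - v i| + b * √(∑ j ∈ univ.erase i, (u j - v j) ^ 2) := add_le_add hown' hothers'
    _ ≤ √(a ^ 2 + b ^ 2) * √(|u i - v i| ^ 2 + √(∑ j ∈ univ.erase i, (u j - v j) ^ 2) ^ 2) :=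
      mul_add_mul_le_sqrt_mul_sqrt _ _ _ _
    _ = √(a ^ 2 + b ^ 2) * ‖u - v‖ := by
      rw [sq_abs, Real.sq_sqrt (by positivity), ← norm_sub_sq_eq_sq_add_sum_erase,
        Real.sqrt_sq (norm_nonneg _)]

end EuclideanSpace

theorem augmented_pseudogradient_lipschitz_general
    (N : ℕ)
    (G : Fin N → EuclideanSpace ℝ (Fin N) → ℝ)
    (θi θmi : Fin N → ℝ)
    (hA2ii : ∀ (i : Fin N) (x : EuclideanSpace ℝ (Fin N)) (s s' : ℝ),
      |G i (WithLp.toLp 2 (Function.update x i s)) - G i (WithLp.toLp 2 (Function.update x i s'))| ≤ θi i * |s - s'|)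
    (hA2iii : ∀ (i : Fin N) (x y : EuclideanSpace ℝ (Fin N)), x i = y i →
      |G i x - G i y| ≤ θmi i * Real.sqrt (∑ j ∈ Finset.univ.erase i, (x j - y j) ^ 2))
    (θ : ℝ)
    (hθ : IsGreatest (Set.range fun i => Real.sqrt (θi i ^ 2 + θmi i ^ 2)) θ)
    (F : PiLp 2 (fun _ : Fin N => EuclideanSpace ℝ (Fin N)) → EuclideanSpace ℝ (Fin N))
    (hF : ∀ x i, F x i = G i (x i)) :
    ∀ x y : PiLp 2 (fun _ : Fin N => EuclideanSpace ℝ (Fin N)),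
      ‖F x - F y‖ ≤ θ * ‖x - y‖ := by
  intro x y
  obtain ⟨i₀, hi₀⟩ := hθ.1
  have hθ_nonneg : 0 ≤ θ := hi₀ ▸ Real.sqrt_nonneg _
  refine PiLp.norm_le_mul_norm_of_forall_norm_apply_le hθ_nonneg fun i => ?_
  rw [Real.norm_eq_abs, PiLp.sub_apply, PiLp.sub_apply, hF, hF]
  exact (EuclideanSpace.abs_sub_le_of_lipschitz_own_and_others (hA2ii i) (hA2iii i) _ _).trans
    (mul_le_mul_of_nonneg_right (hθ.2 ⟨i, rfl⟩) (norm_nonneg _))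

/-- Under Assumption 2(ii)–(iii), the augmented pseudogradient
`𝐅(x¹,…,x^N)_i = G_i(x^i)` is `θ`-Lipschitz with `θ = max_i √(θ_i² + θ_{-i}²)`. -/
theorem augmented_pseudogradient_lipschitz
    (N : ℕ) (hN : 0 < N)
    (G : Fin N → EuclideanSpace ℝ (Fin N) → ℝ)
    (θi θmi : Fin N → ℝ) (hθi : ∀ i, 0 ≤ θi i) (hθmi : ∀ i, 0 ≤ θmi i)
    (hA2ii : ∀ (i : Fin N) (x : EuclideanSpace ℝ (Fin N)) (s s' : ℝ),
      |G i (WithLp.toLp 2 (Function.update x i s)) - G i (WithLp.toLp 2 (Function.update x i s'))| ≤ θi i * |s - s'|)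
    (hA2iii : ∀ (i : Fin N) (x y : EuclideanSpace ℝ (Fin N)), x i = y i →
      |G i x - G i y| ≤ θmi i * Real.sqrt (∑ j ∈ Finset.univ.erase i, (x j - y j) ^ 2))
    (θ : ℝ)
    (hθ : IsGreatest (Set.range fun i => Real.sqrt (θi i ^ 2 + θmi i ^ 2)) θ)
    (F : PiLp 2 (fun _ : Fin N => EuclideanSpace ℝ (Fin N)) → EuclideanSpace ℝ (Fin N))
    (hF : ∀ x i, F x i = G i (x i)) :
    ∀ x y : PiLp 2 (fun _ : Fin N => EuclideanSpace ℝ (Fin N)),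
      ‖F x - F y‖ ≤ θ * ‖x - y‖ :=
  augmented_pseudogradient_lipschitz_general N G θi θmi hA2ii hA2iii θ hθ F hF
end

section
/- Let f : ℝ → ℝ^N be twice differentiable with ‖f″(t)‖ ≤ c₂ for all t, let h > 0, let q be a positive integer, and set t_j = j·h. Then for every integer k ≥ q, the q-step extrapolation error satisfies ‖((q+1)/q)·f(t_k) − (1/q)·f(t_{k−q}) − f(t_{k+1})‖ ≤ c₂ (q+1) h² / 2. -/
/-!
Expand `f` to first order around `t_k`: by Taylor's theorem with the bound `‖f''‖ ≤ c₂`, the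
remainders at `t_{k+1} = t_k + h` and at `t_{k-q} = t_k - q h` have norms at most `c₂ h² / 2` and
`c₂ q² h² / 2`. The weights `(q+1)/q` and `-1/q` are chosen so that the constant and linear terms
of the expansion cancel in the extrapolation error, which is then `-(1/q) R_{k-q} - R_{k+1}`, of
norm at most `c₂ q h² / 2 + c₂ h² / 2`.
-/

open Set

section

variable {E : Type*} [NormedAddCommGroup E] [NormedSpace ℝ E]
  {f f' f'' : ℝ → E} {c : ℝ}

theorem norm_sub_sub_smul_deriv_le_of_le (hf : ∀ t, HasDerivAt f (f' t) t)
    (hf' : ∀ t, HasDerivAt f' (f'' t) t) (hc : ∀ t, ‖f'' t‖ ≤ c) {a b : ℝ} (hab : a ≤ b) :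
    ‖f b - f a - (b - a) • f' a‖ ≤ c * (b - a) ^ 2 / 2 := by
  let g : ℝ → E := fun t => f t - f a - (t - a) • f' a
  have hg : ∀ t, HasDerivAt g (f' t - f' a) t := fun t => by
    have := ((hf t).sub_const (f a)).sub (((hasDerivAt_id t).sub_const a).smul_const (f' a))
    rwa [one_smul] at this
  have hB : ∀ t, HasDerivAt (fun t => c * (t - a) ^ 2 / 2) (c * (t - a)) t := fun t => by
    refine ((((hasDerivAt_id t).sub_const a).fun_pow 2).const_mul c).div_const 2 |>.congr_deriv ?_
    simp only [id, Nat.cast_ofNat]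
    ring
  have hg_bound : ∀ t ∈ Ico a b, ‖f' t - f' a‖ ≤ c * (t - a) := fun t ht => by
    have := convex_univ.norm_image_sub_le_of_norm_hasDerivWithin_le
      (fun x _ => (hf' x).hasDerivWithinAt) (fun x _ => hc x) (mem_univ a) (mem_univ t)
    rwa [Real.norm_eq_abs, abs_of_nonneg (sub_nonneg.2 ht.1)] at this
  simpa [g] using image_norm_le_of_norm_deriv_right_le_deriv_boundary
    (fun t _ => (hg t).continuousAt.continuousWithinAt) (fun t _ => (hg t).hasDerivWithinAt)
    (by simp [g]) hB hg_bound (right_mem_Icc.2 hab)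

theorem norm_sub_sub_smul_deriv_le (hf : ∀ t, HasDerivAt f (f' t) t)
    (hf' : ∀ t, HasDerivAt f' (f'' t) t) (hc : ∀ t, ‖f'' t‖ ≤ c) (a b : ℝ) :
    ‖f b - f a - (b - a) • f' a‖ ≤ c * (b - a) ^ 2 / 2 := by
  rcases le_total a b with hab | hba
  · exact norm_sub_sub_smul_deriv_le_of_le hf hf' hc hab
  · -- reflect `t ↦ -t` to reduce to the case `a ≤ b`
    have hF : ∀ t, HasDerivAt (fun t => f (-t)) (-f' (-t)) t := fun t =>
      ((hf (-t)).scomp t (hasDerivAt_neg t)).congr_deriv (by simp)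
    have hF' : ∀ t, HasDerivAt (fun t => -f' (-t)) (f'' (-t)) t := fun t =>
      ((hf' (-t)).scomp t (hasDerivAt_neg t)).neg.congr_deriv (by simp)
    have := norm_sub_sub_smul_deriv_le_of_le hF hF' (fun t => hc (-t)) (neg_le_neg hba)
    rwa [neg_neg, neg_neg, neg_sub_neg, smul_neg, ← neg_smul, neg_sub, ← neg_sub b a, neg_sq]
      at this

theorem norm_extrapolation_sub_le (hf : ∀ t, HasDerivAt f (f' t) t)
    (hf' : ∀ t, HasDerivAt f' (f'' t) t) (hc : ∀ t, ‖f'' t‖ ≤ c) (a h : ℝ) {r : ℝ} (hr : 0 < r) :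
    ‖((r + 1) / r) • f a - (1 / r) • f (a - r * h) - f (a + h)‖ ≤ c * (r + 1) * h ^ 2 / 2 := by
  set R₁ := f (a + h) - f a - h • f' a
  set R₂ := f (a - r * h) - f a + (r * h) • f' a
  have hR₁ : ‖R₁‖ ≤ c * h ^ 2 / 2 := by
    simpa [R₁] using norm_sub_sub_smul_deriv_le hf hf' hc a (a + h)
  have hR₂ : ‖R₂‖ ≤ c * (r * h) ^ 2 / 2 := by
    simpa [R₂] using norm_sub_sub_smul_deriv_le hf hf' hc a (a - r * h)
  have hE : ((r + 1) / r) • f a - (1 / r) • f (a - r * h) - f (a + h) = -((1 / r) • R₂) - R₁ := by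
    simp only [R₁, R₂]
    match_scalars <;> field_simp <;> ring
  calc ‖((r + 1) / r) • f a - (1 / r) • f (a - r * h) - f (a + h)‖
      ≤ (1 / r) * ‖R₂‖ + ‖R₁‖ := by
        rw [hE]
        refine (norm_sub_le _ _).trans_eq ?_
        rw [norm_neg, norm_smul, Real.norm_of_nonneg (by positivity)]
    _ ≤ (1 / r) * (c * (r * h) ^ 2 / 2) + c * h ^ 2 / 2 := by gcongr
    _ = c * (r + 1) * h ^ 2 / 2 := by field_simp

end

theorem q_step_extrapolation_error_general
    (N : ℕ) (f f' f'' : ℝ → EuclideanSpace ℝ (Fin N))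
    (hf : ∀ t, HasDerivAt f (f' t) t) (hf' : ∀ t, HasDerivAt f' (f'' t) t)
    (c₂ : ℝ) (hc₂ : ∀ t, ‖f'' t‖ ≤ c₂)
    (h : ℝ) (q : ℕ) (hq : 0 < q) (k : ℕ) (hk : q ≤ k) :
    ‖(((q : ℝ) + 1) / q) • f ((k : ℝ) * h) - ((1 : ℝ) / q) • f (((k - q : ℕ) : ℝ) * h)
        - f (((k : ℝ) + 1) * h)‖ ≤ c₂ * ((q : ℝ) + 1) * h ^ 2 / 2 := by
  have h_past : ((k - q : ℕ) : ℝ) * h = k * h - q * h := by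
    rw [Nat.cast_sub hk, sub_mul]
  have h_next : ((k : ℝ) + 1) * h = k * h + h := by ring
  rw [h_past, h_next]
  exact norm_extrapolation_sub_le hf hf' hc₂ _ _ (Nat.cast_pos.2 hq)

/-- the `q`-step extrapolation error bound for a twice differentiable
curve `f : ℝ → ℝ^N` with `‖f″‖ ≤ c₂`: for `k ≥ q`,
`‖((q+1)/q)·f(t_k) − (1/q)·f(t_{k−q}) − f(t_{k+1})‖ ≤ c₂ (q+1) h² / 2` where `t_j = j·h`. -/
theorem q_step_extrapolation_error
    (N : ℕ) (f f' f'' : ℝ → EuclideanSpace ℝ (Fin N))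
    (hf : ∀ t, HasDerivAt f (f' t) t) (hf' : ∀ t, HasDerivAt f' (f'' t) t)
    (c₂ : ℝ) (hc₂ : ∀ t, ‖f'' t‖ ≤ c₂)
    (h : ℝ) (hh : 0 < h) (q : ℕ) (hq : 0 < q) (k : ℕ) (hk : q ≤ k) :
    ‖(((q : ℝ) + 1) / q) • f ((k : ℝ) * h) - ((1 : ℝ) / q) • f (((k - q : ℕ) : ℝ) * h)
        - f (((k : ℝ) + 1) * h)‖ ≤ c₂ * ((q : ℝ) + 1) * h ^ 2 / 2 :=
  q_step_extrapolation_error_general N f f' f'' hf hf' c₂ hc₂ h q hq k hk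
end

section
/- (Lemma 2) For every integer k ≥ q, the stacked prediction error of Algorithm 1's prediction step satisfies ‖𝐱_{k+1|k} − 𝐱*(t_{k+1})‖ ≤ ((q+1)/q)·‖𝐱_k − 𝐱*(t_k)‖ + (1/q)·‖𝐱_{k−q} − 𝐱*(t_{k−q})‖ + c₂·√N·(q+1)·h²/2. -/
/-!
Subtracting `𝐱*(t_{k+1})`, the prediction error is `((q+1)/q)(𝐱_k - 𝐱*(t_k))
- (1/q)(𝐱_{k-q} - 𝐱*(t_{k-q}))` plus the error of extrapolating the trajectory linearly from
`t_{k-q}, t_k` to `t_{k+1}`. All blocks of `𝐱*` equal `x*`, so that last error is `√N` times the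
one for `x*`, which is a combination of the first-order Taylor remainders of `x*` at `t_k` over
the steps `h` and `-q h`. A bound `c₂` on `ẍ*` makes each remainder at most `c₂ s² / 2` for a
step `s`, and `c₂ h² / 2 + (1/q) c₂ (q h)² / 2 = c₂ (q + 1) h² / 2`.
-/

open Set

section Taylor

variable {E : Type*} [NormedAddCommGroup E] [NormedSpace ℝ E] {f f' : ℝ → E} {c : ℝ}

theorem norm_sub_le_mul_abs_of_norm_deriv_le {f'' : ℝ → E} (hf : ∀ t, HasDerivAt f' (f'' t) t)
    (hc : ∀ t, ‖f'' t‖ ≤ c) (s t : ℝ) : ‖f' s - f' t‖ ≤ c * |s - t| := by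
  simpa only [Real.norm_eq_abs] using convex_univ.norm_image_sub_le_of_norm_hasDerivWithin_le
    (fun x _ => (hf x).hasDerivWithinAt) (fun x _ => hc x) (mem_univ t) (mem_univ s)

/-- The remainder `f b - f a - (b - a) • f' a` has derivative `f' b - f' a` in `b`, of norm at
most `c * (b - a)`, the derivative of `c * (b - a) ^ 2 / 2`; both vanish at `b = a`. -/
theorem norm_sub_sub_smul_le_of_le (hf : ∀ t, HasDerivAt f (f' t) t)
    (hf' : ∀ s t, ‖f' s - f' t‖ ≤ c * |s - t|) {a b : ℝ} (hab : a ≤ b) :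
    ‖f b - f a - (b - a) • f' a‖ ≤ c * (b - a) ^ 2 / 2 := by
  have hg : ∀ t, HasDerivAt (fun t => f t - f a - (t - a) • f' a) (f' t - f' a) t := fun t => by
    have := ((hf t).sub_const (f a)).sub (((hasDerivAt_id' t).sub_const a).smul_const (f' a))
    rwa [one_smul] at this
  have hB : ∀ t, HasDerivAt (fun t => c * (t - a) ^ 2 / 2) (c * (t - a)) t := fun t =>
    ((((hasDerivAt_id' t).sub_const a).fun_pow 2).const_mul c).div_const 2 |>.congr_deriv
      (by ring)
  refine image_norm_le_of_norm_deriv_right_le_deriv_boundary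
    (fun t _ => (hg t).continuousAt.continuousWithinAt) (fun t _ => (hg t).hasDerivWithinAt)
    (by simp) hB (fun t ht => ?_) (right_mem_Icc.2 hab)
  simpa [abs_of_nonneg (sub_nonneg.2 ht.1)] using hf' t a

theorem norm_sub_sub_smul_le (hf : ∀ t, HasDerivAt f (f' t) t)
    (hf' : ∀ s t, ‖f' s - f' t‖ ≤ c * |s - t|) (a b : ℝ) :
    ‖f b - f a - (b - a) • f' a‖ ≤ c * (b - a) ^ 2 / 2 := by
  rcases le_total a b with hab | hba
  · exact norm_sub_sub_smul_le_of_le hf hf' hab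
  -- reflect `t ↦ -t` to reduce to the case `a ≤ b`
  have hg : ∀ t, HasDerivAt (fun t => f (-t)) (-f' (-t)) t := fun t => by
    have := (hf (-t)).scomp t (hasDerivAt_neg t)
    rwa [neg_one_smul] at this
  have hg' : ∀ s t, ‖-f' (-s) - -f' (-t)‖ ≤ c * |s - t| := fun s t => by
    simpa only [neg_sub_neg, sub_neg_eq_add, neg_add_eq_sub] using hf' (-t) (-s)
  have h := norm_sub_sub_smul_le_of_le hg hg' (neg_le_neg hba)
  rwa [neg_neg, neg_neg, neg_sub_neg, smul_neg, ← neg_smul, neg_sub, ← neg_sub b a,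
    neg_sq] at h

theorem norm_extrapolate_sub_le (hf : ∀ t, HasDerivAt f (f' t) t)
    (hf' : ∀ s t, ‖f' s - f' t‖ ≤ c * |s - t|) {q : ℝ} (hq : 0 < q) (a h : ℝ) :
    ‖((q + 1) / q) • f a - (1 / q) • f (a - q * h) - f (a + h)‖ ≤ c * (q + 1) * h ^ 2 / 2 := by
  have hfwd := norm_sub_sub_smul_le hf hf' a (a + h)
  have hbwd := norm_sub_sub_smul_le hf hf' a (a - q * h)
  rw [add_sub_cancel_left] at hfwd
  rw [sub_sub_cancel_left] at hbwd
  have hsplit : ((q + 1) / q) • f a - (1 / q) • f (a - q * h) - f (a + h)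
      = -(f (a + h) - f a - h • f' a) - (1 / q) • (f (a - q * h) - f a - -(q * h) • f' a) := by
    match_scalars <;> field_simp <;> ring
  calc _ ≤ ‖f (a + h) - f a - h • f' a‖ + (1 / q) * ‖f (a - q * h) - f a - -(q * h) • f' a‖ := by
        rw [hsplit]
        refine (norm_sub_le _ _).trans_eq ?_
        rw [norm_neg, norm_smul, Real.norm_eq_abs, abs_of_pos (one_div_pos.2 hq)]
    _ ≤ c * h ^ 2 / 2 + (1 / q) * (c * (-(q * h)) ^ 2 / 2) := by gcongr
    _ = c * (q + 1) * h ^ 2 / 2 := by field_simp; ring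

end Taylor

theorem PiLp.norm_two_eq_sqrt_card_mul {ι : Type*} [Fintype ι] {β : Type*}
    [SeminormedAddCommGroup β] {x : PiLp 2 (fun _ : ι => β)} {b : β} (hx : ∀ i, x i = b) :
    ‖x‖ = √(Fintype.card ι) * ‖b‖ := by
  have : x = WithLp.toLp 2 (Function.const ι b) := by ext i; exact hx i
  rw [this, PiLp.norm_toLp_const (by simp), Real.sqrt_eq_rpow]
  norm_num

theorem norm_smul_sub_smul_sub_le {F : Type*} [SeminormedAddCommGroup F] [NormedSpace ℝ F]
    (α β : ℝ) (u v w u' v' : F) :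
    ‖α • u - β • v - w‖ ≤ |α| * ‖u - u'‖ + |β| * ‖v - v'‖ + ‖α • u' - β • v' - w‖ := by
  have : α • u - β • v - w = α • (u - u') - β • (v - v') + (α • u' - β • v' - w) := by module
  rw [this, ← Real.norm_eq_abs, ← Real.norm_eq_abs, ← norm_smul, ← norm_smul]
  exact (norm_add_le _ _).trans (by gcongr; exact norm_sub_le _ _)

theorem prediction_error_bound_general
    (N : ℕ)
    (xstar xd xdd : ℝ → EuclideanSpace ℝ (Fin N))
    (hx1 : ∀ t, HasDerivAt xstar (xd t) t) (hx2 : ∀ t, HasDerivAt xd (xdd t) t)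
    (c₂ : ℝ) (hc₂ : ∀ t, ‖xdd t‖ ≤ c₂)
    (h : ℝ) (q : ℕ) (hq : 0 < q)
    (X : ℕ → PiLp 2 (fun _ : Fin N => EuclideanSpace ℝ (Fin N)))
    (Xstar : ℝ → PiLp 2 (fun _ : Fin N => EuclideanSpace ℝ (Fin N)))
    (hXstar : ∀ t i, Xstar t i = xstar t)
    (k : ℕ) (hk : q ≤ k) :
    ‖(((q : ℝ) + 1) / q) • X k - ((1 : ℝ) / q) • X (k - q) - Xstar (((k : ℝ) + 1) * h)‖
      ≤ (((q : ℝ) + 1) / q) * ‖X k - Xstar ((k : ℝ) * h)‖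
        + (1 / (q : ℝ)) * ‖X (k - q) - Xstar (((k - q : ℕ) : ℝ) * h)‖
        + c₂ * Real.sqrt N * ((q : ℝ) + 1) * h ^ 2 / 2 := by
  have hq' : (0 : ℝ) < q := Nat.cast_pos.2 hq
  have hnext : ((k : ℝ) + 1) * h = k * h + h := by ring
  have hprev : ((k - q : ℕ) : ℝ) * h = k * h - q * h := by rw [Nat.cast_sub hk]; ring
  have hstack := PiLp.norm_two_eq_sqrt_card_mul (x := (((q : ℝ) + 1) / q) • Xstar ((k : ℝ) * h)
      - ((1 : ℝ) / q) • Xstar (((k - q : ℕ) : ℝ) * h) - Xstar (((k : ℝ) + 1) * h))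
    (b := (((q : ℝ) + 1) / q) • xstar (k * h) - (1 / (q : ℝ)) • xstar (k * h - q * h)
      - xstar (k * h + h)) (by simp [hXstar, hnext, hprev])
  have hextrap := norm_extrapolate_sub_le hx1 (norm_sub_le_mul_abs_of_norm_deriv_le hx2 hc₂) hq'
    (k * h) h
  rw [Fintype.card_fin] at hstack
  calc _ ≤ _ := norm_smul_sub_smul_sub_le _ _ _ _ _ (Xstar ((k : ℝ) * h))
          (Xstar (((k - q : ℕ) : ℝ) * h))
    _ ≤ _ := by
      rw [hstack, abs_of_pos (by positivity), abs_of_pos (by positivity)]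
      have := mul_le_mul_of_nonneg_left hextrap (Real.sqrt_nonneg N)
      linarith

/-- Lemma 2: for `k ≥ q`, the stacked prediction error of Algorithm 1's
prediction step `𝐱_{k+1|k} = ((q+1)/q)·𝐱_k − (1/q)·𝐱_{k−q}` satisfies
`‖𝐱_{k+1|k} − 𝐱*(t_{k+1})‖ ≤ ((q+1)/q)‖𝐱_k − 𝐱*(t_k)‖ + (1/q)‖𝐱_{k−q} − 𝐱*(t_{k−q})‖
  + c₂·√N·(q+1)·h²/2`. -/
theorem prediction_error_bound
    (N : ℕ) (hN : 0 < N)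
    (xstar xd xdd : ℝ → EuclideanSpace ℝ (Fin N))
    (hx1 : ∀ t, HasDerivAt xstar (xd t) t) (hx2 : ∀ t, HasDerivAt xd (xdd t) t)
    (c₂ : ℝ) (hc₂ : ∀ t, ‖xdd t‖ ≤ c₂)
    (h : ℝ) (hh : 0 < h) (q : ℕ) (hq : 0 < q)
    (X : ℕ → PiLp 2 (fun _ : Fin N => EuclideanSpace ℝ (Fin N)))
    (Xstar : ℝ → PiLp 2 (fun _ : Fin N => EuclideanSpace ℝ (Fin N)))
    (hXstar : ∀ t i, Xstar t i = xstar t)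
    (k : ℕ) (hk : q ≤ k) :
    ‖(((q : ℝ) + 1) / q) • X k - ((1 : ℝ) / q) • X (k - q) - Xstar (((k : ℝ) + 1) * h)‖
      ≤ (((q : ℝ) + 1) / q) * ‖X k - Xstar ((k : ℝ) * h)‖
        + (1 / (q : ℝ)) * ‖X (k - q) - Xstar (((k - q : ℕ) : ℝ) * h)‖
        + c₂ * Real.sqrt N * ((q : ℝ) + 1) * h ^ 2 / 2 :=
  prediction_error_bound_general N xstar xd xdd hx1 hx2 c₂ hc₂ h q hq X Xstar hXstar k hk
end

section
/- Every equilibrium of the stacked correction dynamics is consensus at a Nash equilibrium: if 𝐱* = (x*¹,…,x*^N) ∈ (ℝ^N)^N satisfies α·(L⊗I_N)𝐱* + R𝐅(𝐱*) = 0 (blockwise: α·Σ_{j=1}^N L_{ij} x*^j + ε·G_i(x*^i)·e_i = 0 for every i), then there exists y* ∈ ℝ^N such that x*^i = y* for every i and F(y*) = 0, i.e., G_i(y*) = 0 for every i. -/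
/-!
Read the equilibrium equations coordinate by coordinate: for a fixed coordinate `k`, the
profile `v_k = (x^j_k)_j` of the players' estimates satisfies `α (L v_k)_i = 0` for every
`i ≠ k`. Since `L` is symmetric with `L 1 = 0`, the entries of `L v_k` sum to `1ᵀ L v_k = 0`,
so the remaining entry vanishes too and `v_k ∈ ker L = span 1`: all players agree on every
coordinate. The `k`-th equation of player `k` then reduces to `ε G_k(y) = 0`.
-/

open Matrix

namespace Matrix.IsSymm

variable {R ι : Type*} [CommSemiring R] [Fintype ι] {L : Matrix ι ι R}

theorem sum_mulVec_eq_zero (hL : L.IsSymm) (hL1 : L *ᵥ (fun _ => 1) = 0) (v : ι → R) :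
    ∑ i, (L *ᵥ v) i = 0 := by
  rw [← one_dotProduct, dotProduct_mulVec, ← hL.eq, vecMul_transpose]
  exact hL1 ▸ zero_dotProduct v

theorem mulVec_eq_zero_of_forall_ne (hL : L.IsSymm) (hL1 : L *ᵥ (fun _ => 1) = 0)
    {v : ι → R} (k : ι) (hv : ∀ i ≠ k, (L *ᵥ v) i = 0) : L *ᵥ v = 0 := by
  funext i
  by_cases hik : i = k
  · subst hik
    rw [← Fintype.sum_eq_single i hv]
    exact hL.sum_mulVec_eq_zero hL1 v
  · exact hv i hik

end Matrix.IsSymm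

theorem stacked_equilibrium_apply {ι : Type*} [Fintype ι] [DecidableEq ι] {α ε : ℝ}
    {L : Matrix ι ι ℝ} {G : ι → EuclideanSpace ℝ ι → ℝ} {x : ι → EuclideanSpace ℝ ι}
    (heq : ∀ i, α • (∑ j, L i j • x j) + (ε * G i (x i)) • EuclideanSpace.single i (1 : ℝ)
      = 0) (i k : ι) :
    α * (L *ᵥ fun j => x j k) i + (if k = i then ε * G i (x i) else 0) = 0 := by
  have h := congrArg (· k) (heq i)
  simpa [mulVec, dotProduct, PiLp.single_apply, WithLp.ofLp_sum] using h

theorem equilibrium_is_consensus_NE_general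
    (N : ℕ) (α ε : ℝ) (hα : 0 < α) (hε : 0 < ε)
    (L : Matrix (Fin N) (Fin N) ℝ) (hLsymm : L.IsSymm)
    (hL1 : L.mulVec (fun _ => 1) = 0)
    (hker : ∀ v : Fin N → ℝ, L.mulVec v = 0 → ∃ c : ℝ, v = fun _ => c)
    (G : Fin N → EuclideanSpace ℝ (Fin N) → ℝ)
    (x : Fin N → EuclideanSpace ℝ (Fin N))
    (heq : ∀ i, α • (∑ j, L i j • x j) + (ε * G i (x i)) • EuclideanSpace.single i (1 : ℝ)
        = (0 : EuclideanSpace ℝ (Fin N))) :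
    ∃ y : EuclideanSpace ℝ (Fin N), (∀ i, x i = y) ∧ ∀ i, G i y = 0 := by
  have hcoord := stacked_equilibrium_apply heq
  have hkernel : ∀ k, L *ᵥ (fun j => x j k) = 0 := fun k =>
    hLsymm.mulVec_eq_zero_of_forall_ne hL1 k fun i hik => by
      simpa [hα.ne', Ne.symm hik] using hcoord i k
  choose c hc using fun k => hker _ (hkernel k)
  have hconsensus : ∀ i, x i = WithLp.toLp 2 c := fun i => by
    ext k
    exact congrFun (hc k) i
  refine ⟨WithLp.toLp 2 c, hconsensus, fun i => ?_⟩
  simpa [hkernel, hε.ne', ← hconsensus i] using hcoord i i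

/-- every equilibrium of the stacked correction dynamics is consensus at a
Nash equilibrium: if `α·Σ_j L_{ij} x*^j + ε·G_i(x*^i)·e_i = 0` for every `i`, then all
blocks `x*^i` coincide with some `y*` and `G_i(y*) = 0` for every `i`. -/
theorem equilibrium_is_consensus_NE
    (N : ℕ) (hN : 0 < N) (α ε : ℝ) (hα : 0 < α) (hε : 0 < ε)
    (L : Matrix (Fin N) (Fin N) ℝ) (hLsymm : L.IsSymm) (hLpsd : L.PosSemidef)
    (hL1 : L.mulVec (fun _ => 1) = 0)
    (hker : ∀ v : Fin N → ℝ, L.mulVec v = 0 → ∃ c : ℝ, v = fun _ => c)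
    (G : Fin N → EuclideanSpace ℝ (Fin N) → ℝ)
    (x : Fin N → EuclideanSpace ℝ (Fin N))
    (heq : ∀ i, α • (∑ j, L i j • x j) + (ε * G i (x i)) • EuclideanSpace.single i (1 : ℝ)
        = (0 : EuclideanSpace ℝ (Fin N))) :
    ∃ y : EuclideanSpace ℝ (Fin N), (∀ i, x i = y) ∧ ∀ i, G i y = 0 :=
  equilibrium_is_consensus_NE_general N α ε hα hε L hLsymm hL1 hker G x heq
end

section
/- Let β ∈ (0,1) and let q be a positive integer with q > 2β/(1−β). Then there exists γ ∈ (0,1) such that (β(q+1)/q)·(1/γ) + (β/q)·(1/γ^{q+1}) ≤ 1; moreover, every γ ∈ (0,1] satisfying this inequality satisfies γ ≥ β(q+1)/q > β. -/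
/-- for `β ∈ (0,1)` and a positive integer `q > 2β/(1−β)`, there exists
`γ ∈ (0,1)` with `(β(q+1)/q)·(1/γ) + (β/q)·(1/γ^{q+1}) ≤ 1`; moreover every
`γ ∈ (0,1]` satisfying this inequality satisfies `γ ≥ β(q+1)/q > β`. -/
theorem exists_gamma_condition14
    (β : ℝ) (hβ : 0 < β) (hβ1 : β < 1) (q : ℕ) (hq : 0 < q)
    (hqβ : 2 * β / (1 - β) < (q : ℝ)) :
    (∃ γ : ℝ, 0 < γ ∧ γ < 1 ∧
        β * ((q : ℝ) + 1) / q * (1 / γ) + β / q * (1 / γ ^ (q + 1)) ≤ 1) ∧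
    (∀ γ : ℝ, 0 < γ → γ ≤ 1 →
        β * ((q : ℝ) + 1) / q * (1 / γ) + β / q * (1 / γ ^ (q + 1)) ≤ 1 →
        β * ((q : ℝ) + 1) / q ≤ γ) ∧
    β < β * ((q : ℝ) + 1) / q := by
  have hq' : (0:ℝ) < q := by exact_mod_cast hq
  have h1β : 0 < 1 - β := by linarith
  have hkey : β * ((q:ℝ) + 2) < q := by
    have h2 : 2 * β < (q:ℝ) * (1 - β) := (div_lt_iff₀ h1β).mp hqβ
    nlinarith
  set a : ℝ := β * ((q:ℝ) + 2) / q with ha_def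
  have ha0 : 0 < a := by positivity
  have ha1 : a < 1 := (div_lt_one hq').mpr hkey
  refine ⟨?_, ?_, ?_⟩
  · set γ : ℝ := a ^ (((q:ℝ) + 1)⁻¹) with hγ_def
    have hγ0 : 0 < γ := Real.rpow_pos_of_pos ha0 _
    have hγ1 : γ < 1 := Real.rpow_lt_one ha0.le ha1 (by positivity)
    have hγpow : γ ^ (q + 1) = a := by
      rw [hγ_def, ← Real.rpow_natCast (a ^ (((q:ℝ) + 1)⁻¹)) (q+1),
        ← Real.rpow_mul ha0.le]
      push_cast
      rw [inv_mul_cancel₀ (by positivity), Real.rpow_one]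
    refine ⟨γ, hγ0, hγ1, ?_⟩
    have hγq : γ ^ q ≤ 1 := pow_le_one₀ hγ0.le hγ1.le
    have hmain : β * ((q:ℝ) + 1) / q * γ ^ q + β / q ≤ γ ^ (q + 1) := by
      rw [hγpow, ha_def]
      have h1 : β * ((q:ℝ) + 1) / q * γ ^ q ≤ β * ((q:ℝ) + 1) / q * 1 :=
        mul_le_mul_of_nonneg_left hγq (by positivity)
      have h2 : β * ((q:ℝ) + 2) / q = β * ((q:ℝ) + 1) / q * 1 + β / q := by
        field_simp; ring
      linarith
    have hrw : β * ((q:ℝ) + 1) / q * (1 / γ) + β / q * (1 / γ ^ (q + 1))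
        = (β * ((q:ℝ) + 1) / q * γ ^ q + β / q) / γ ^ (q + 1) := by
      rw [pow_succ]
      field_simp
    rw [hrw]
    exact (div_le_one (pow_pos hγ0 _)).mpr hmain
  · intro γ hγ0 hγ1 h
    have hpos : 0 ≤ β / q * (1 / γ ^ (q + 1)) := by positivity
    have h2 : β * ((q:ℝ) + 1) / q * (1 / γ) ≤ 1 := by linarith
    rw [mul_one_div, div_le_one hγ0] at h2
    exact h2
  · rw [lt_div_iff₀ hq']
    nlinarith
end
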